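/- For all integers p and q: if p is even then y_{p,q} ▷ a = y_{p+1,−q} and y_{p,q} ▷ b = y_{p−1,−q}; if p is odd then y_{p,q} ▷ a = y_{p−1,−q} and y_{p,q} ▷ b = y_{p+1,−q}. Moreover y_{p,q} ▷ e = y_{p,q} ▷ a and y_{p,q} ▷ f = y_{p,q} ▷ b. -/

import Mathlib

/-- A quandle as in the paper: a set with operations `▷` and `▷⁻¹` satisfying
axioms A1, A2, A3. -/
class PaperQuandle (Q : Type*) where
  rhd : Q → Q → Q
  rhdInv : Q → Q → Q
  fix : ∀ x : Q, rhd x x = x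
  inv_rhd : ∀ x y : Q, rhdInv (rhd x y) y = x
  rhd_inv : ∀ x y : Q, rhd (rhdInv x y) y = x
  self_distrib : ∀ x y z : Q, rhd (rhd x y) z = rhd (rhd x z) (rhd y z)

infixl:65 " ▷ " => PaperQuandle.rhd
infixl:65 " ▷⁻¹ " => PaperQuandle.rhdInv

/-- The point symmetry at `u`, as a permutation of `Q`: `x ↦ x ▷ u`,
with inverse `x ↦ x ▷⁻¹ u`. -/
def ptSym {Q : Type*} [PaperQuandle Q] (u : Q) : Equiv.Perm Q where
  toFun x := x ▷ u
  invFun x := x ▷⁻¹ u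
  left_inv x := PaperQuandle.inv_rhd x u
  right_inv x := PaperQuandle.rhd_inv x u

/-- The element `y_{p,q} = d^{(ab)^t c^q}` if `p = 2t`, and
`d^{(ab)^t a c^q}` if `p = 2t+1`.  Here the word `ab` (apply `a`, then `b`)
is the permutation `ptSym b * ptSym a`. -/
def Y {Q : Type*} [PaperQuandle Q] (a b c d : Q) (p q : ℤ) : Q :=
  if Even p then
    (ptSym c ^ q) (((ptSym b * ptSym a) ^ (p / 2)) d)
  else
    (ptSym c ^ q) ((((ptSym b * ptSym a) ^ ((p - 1) / 2)) d) ▷ a)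


/-!
Everything happens in the group of permutations of `Q` generated by the point symmetries
`A, B, C, D, E, F` of `a, …, f`. The relations force `E = A D⁻¹` and `F = B D⁻¹`; since `E` and
`F` are involutions, conjugation by `A` and by `B` inverts `D`, so `D` commutes with `BA`.
The relation for `c` then gives `C = (BA)⁻ᵏ D⁻¹`, an element of the abelian group `⟨BA, D⟩`
inverted by `A` and by `B`. Applied to `d` (which `D` fixes), these commutation rules move
`y_{p,q}` along the `p`-axis and flip `q`, and show that `D` fixes every `y_{p,q}`, so that
`E` and `F` act on it as `A` and `B`.
-/

section Inverts

variable {G : Type*} [Group G] {a b c d x y : G}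

def Inverts (a x : G) : Prop := a * x * a⁻¹ = x⁻¹

theorem Inverts.mul_eq (h : Inverts a x) : a * x = x⁻¹ * a := by
  rw [← h]; group

theorem Inverts.inv_mul_eq (h : Inverts a x) : x⁻¹ * a = a * x := by
  rw [← h]; group

theorem Inverts.inv (h : Inverts a x) : Inverts a x⁻¹ :=
  calc a * x⁻¹ * a⁻¹ = (a * x * a⁻¹)⁻¹ := by group
    _ = x⁻¹⁻¹ := by rw [h]

theorem Inverts.zpow (h : Inverts a x) (j : ℤ) : Inverts a (x ^ j) := by
  rw [Inverts, ← conj_zpow, h, inv_zpow]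

theorem Inverts.mul_of_commute (hx : Inverts a x) (hy : Inverts a y) (hxy : Commute x y) :
    Inverts a (x * y) := by
  unfold Inverts at *
  calc a * (x * y) * a⁻¹ = (a * x * a⁻¹) * (a * y * a⁻¹) := by group
    _ = (y * x)⁻¹ := by rw [hx, hy, mul_inv_rev]
    _ = (x * y)⁻¹ := by rw [hxy.eq]

theorem Inverts.commute_mul (ha : Inverts a x) (hb : Inverts b x) : Commute (b * a) x := by
  calc b * a * x = b * (a * x * a⁻¹) * a := by group
    _ = (b * x * b⁻¹)⁻¹ * (b * a) := by rw [ha]; group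
    _ = x * (b * a) := by rw [hb, inv_inv]

theorem Inverts.of_mul_self_eq_one (ha : a * a = 1) (h : a * x * (a * x) = 1) : Inverts a x := by
  rw [Inverts, inv_eq_of_mul_eq_one_right ha]
  exact eq_inv_of_mul_eq_one_left (by rw [← h]; group)

theorem inverts_mul_self_right (ha : a * a = 1) (hb : b * b = 1) : Inverts a (b * a) := by
  rw [Inverts, mul_inv_rev, inv_eq_of_mul_eq_one_right ha, inv_eq_of_mul_eq_one_right hb]
  calc a * (b * a) * a = a * b * (a * a) := by group
    _ = a * b := by rw [ha, mul_one]

theorem inverts_mul_self_left (ha : a * a = 1) (hb : b * b = 1) : Inverts b (b * a) := by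
  rw [Inverts, mul_inv_rev, inv_eq_of_mul_eq_one_right ha, inv_eq_of_mul_eq_one_right hb]
  calc b * (b * a) * b = (b * b) * a * b := by group
    _ = a * b := by rw [hb, one_mul]

theorem inverts_of_mul_inv_mul_self (ha : a * a = 1) (h : a * d⁻¹ * (a * d⁻¹) = 1) :
    Inverts a d := by
  simpa using (Inverts.of_mul_self_eq_one ha h).inv

theorem Inverts.zpow_mul_inv (hb : Inverts a b) (hd : Inverts a d) (hbd : Commute b d) (j : ℤ) :
    Inverts a (b ^ j * d⁻¹) :=
  (hb.zpow j).mul_of_commute hd.inv (hbd.zpow_left j).inv_right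

theorem eq_mul_inv_of_mul_mul_eq_one_left (ha : a * a = 1) (h : a * x * d = 1) :
    x = a * d⁻¹ := by
  rw [← inv_eq_of_mul_eq_one_right ha]
  exact eq_inv_mul_of_mul_eq (mul_eq_one_iff_eq_inv.mp h)

theorem eq_mul_inv_of_mul_mul_eq_one_right (hb : b * b = 1) (h : x * d * b = 1) :
    x = b * d⁻¹ := by
  rw [← inv_eq_of_mul_eq_one_right hb]
  exact eq_mul_inv_of_mul_eq (mul_eq_one_iff_eq_inv.mp h)

theorem eq_zpow_neg_mul_inv (ha : a * a = 1) (had : Inverts a d) {k : ℤ}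
    (h : a * d⁻¹ * a * b ^ k * c = 1) : c = b ^ (-k) * d⁻¹ := by
  have hdinv : a * d⁻¹ * a = d := by
    simpa [Inverts, inv_eq_of_mul_eq_one_right ha] using had.inv
  rw [hdinv] at h
  rw [zpow_neg, ← mul_inv_rev, eq_inv_of_mul_eq_one_right h]

end Inverts

section PointSymmetries

variable {Q : Type*} [PaperQuandle Q] {a b c d u v w y : Q}

theorem ptSym_apply_self (u : Q) : ptSym u u = u :=
  PaperQuandle.fix u

theorem ptSym_inv_apply_self (u : Q) : (ptSym u)⁻¹ u = u :=
  Equiv.Perm.inv_eq_iff_eq.mpr (ptSym_apply_self u).symm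

theorem rhd_eq_rhd_of_ptSym_eq (h : ptSym u = ptSym v * (ptSym w)⁻¹) (hy : (ptSym w)⁻¹ y = y) :
    y ▷ u = y ▷ v :=
  show ptSym u y = ptSym v y by rw [h, Equiv.Perm.mul_apply, hy]

theorem Y_two_mul (t q : ℤ) :
    Y a b c d (2 * t) q = (ptSym c ^ q * (ptSym b * ptSym a) ^ t) d := by
  rw [Y, if_pos (even_two_mul t), Int.mul_ediv_cancel_left t two_ne_zero]
  rfl

theorem Y_two_mul_add_one (t q : ℤ) :
    Y a b c d (2 * t + 1) q = (ptSym c ^ q * ptSym a * (ptSym b * ptSym a) ^ t) d := by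
  rw [Y, if_neg (Int.not_even_two_mul_add_one t), add_sub_cancel_right,
    Int.mul_ediv_cancel_left t two_ne_zero]
  rfl

theorem rhd_eq_of_ptSym_mul_eq {σ τ : Equiv.Perm Q} (h : ptSym u * σ = τ) (x : Q) :
    σ x ▷ u = τ x := by
  rw [← h]; rfl

theorem Y_rhd_left_of_even (hac : Inverts (ptSym a) (ptSym c)) {p : ℤ} (hp : Even p) (q : ℤ) :
    Y a b c d p q ▷ a = Y a b c d (p + 1) (-q) := by
  obtain ⟨t, rfl⟩ := hp.two_dvd
  rw [Y_two_mul, Y_two_mul_add_one, zpow_neg]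
  apply rhd_eq_of_ptSym_mul_eq
  rw [← mul_assoc, (hac.zpow q).mul_eq]

theorem Y_rhd_right_of_even (hb : ptSym b * ptSym b = 1) (hbc : Inverts (ptSym b) (ptSym c))
    {p : ℤ} (hp : Even p) (q : ℤ) :
    Y a b c d p q ▷ b = Y a b c d (p - 1) (-q) := by
  obtain ⟨t, rfl⟩ := hp.two_dvd
  rw [show 2 * t - 1 = 2 * (t - 1) + 1 by ring, Y_two_mul, Y_two_mul_add_one, zpow_neg]
  apply rhd_eq_of_ptSym_mul_eq
  calc ptSym b * (ptSym c ^ q * (ptSym b * ptSym a) ^ t)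
      = (ptSym c ^ q)⁻¹ * (ptSym b * ptSym b) * ptSym a * (ptSym b * ptSym a) ^ (t - 1) := by
        rw [← mul_assoc, (hbc.zpow q).mul_eq, show t = 1 + (t - 1) by ring, zpow_one_add]
        simp only [mul_assoc, add_sub_cancel_left]
    _ = (ptSym c ^ q)⁻¹ * ptSym a * (ptSym b * ptSym a) ^ (t - 1) := by rw [hb, mul_one]

theorem Y_rhd_left_of_odd (ha : ptSym a * ptSym a = 1) (hac : Inverts (ptSym a) (ptSym c))
    {p : ℤ} (hp : Odd p) (q : ℤ) :
    Y a b c d p q ▷ a = Y a b c d (p - 1) (-q) := by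
  obtain ⟨t, rfl⟩ := hp
  rw [add_sub_cancel_right, Y_two_mul, Y_two_mul_add_one, zpow_neg]
  apply rhd_eq_of_ptSym_mul_eq
  calc ptSym a * (ptSym c ^ q * ptSym a * (ptSym b * ptSym a) ^ t)
      = (ptSym c ^ q)⁻¹ * (ptSym a * ptSym a) * (ptSym b * ptSym a) ^ t := by
        rw [← mul_assoc, ← mul_assoc, (hac.zpow q).mul_eq]
        simp only [mul_assoc]
    _ = (ptSym c ^ q)⁻¹ * (ptSym b * ptSym a) ^ t := by rw [ha, mul_one]

theorem Y_rhd_right_of_odd (hbc : Inverts (ptSym b) (ptSym c)) {p : ℤ} (hp : Odd p) (q : ℤ) :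
    Y a b c d p q ▷ b = Y a b c d (p + 1) (-q) := by
  obtain ⟨t, rfl⟩ := hp
  rw [show 2 * t + 1 + 1 = 2 * (t + 1) by ring, Y_two_mul, Y_two_mul_add_one, zpow_neg,
    add_comm t, zpow_one_add]
  apply rhd_eq_of_ptSym_mul_eq
  rw [← mul_assoc, ← mul_assoc, (hbc.zpow q).mul_eq]
  simp only [mul_assoc]

theorem ptSym_inv_apply_Y (had : Inverts (ptSym a) (ptSym d))
    (hdc : Commute (ptSym d) (ptSym c)) (hdba : Commute (ptSym d) (ptSym b * ptSym a))
    (p q : ℤ) : (ptSym d)⁻¹ (Y a b c d p q) = Y a b c d p q := by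
  obtain ⟨t, rfl | rfl⟩ := Int.even_or_odd' p
  · rw [Y_two_mul, ← Equiv.Perm.mul_apply,
      ((hdc.zpow_right q).mul_right (hdba.zpow_right t)).inv_left.eq, Equiv.Perm.mul_apply,
      ptSym_inv_apply_self]
  · have hconj : (ptSym d)⁻¹ * (ptSym c ^ q * ptSym a * (ptSym b * ptSym a) ^ t) =
        ptSym c ^ q * ptSym a * (ptSym b * ptSym a) ^ t * ptSym d :=
      calc (ptSym d)⁻¹ * (ptSym c ^ q * ptSym a * (ptSym b * ptSym a) ^ t)
          = ptSym c ^ q * ((ptSym d)⁻¹ * ptSym a) * (ptSym b * ptSym a) ^ t := by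
            rw [← mul_assoc, ← mul_assoc, (hdc.zpow_right q).inv_left.eq]
            simp only [mul_assoc]
        _ = ptSym c ^ q * ptSym a * (ptSym d * (ptSym b * ptSym a) ^ t) := by
            rw [had.inv_mul_eq]
            simp only [mul_assoc]
        _ = ptSym c ^ q * ptSym a * (ptSym b * ptSym a) ^ t * ptSym d := by
            rw [(hdba.zpow_right t).eq]
            simp only [mul_assoc]
    rw [Y_two_mul_add_one, ← Equiv.Perm.mul_apply, hconj, Equiv.Perm.mul_apply,
      ptSym_apply_self]

end PointSymmetries

theorem stmt_18_general
    {Q : Type*} [PaperQuandle Q] (k : ℤ) (a b c d e f : Q)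
    (rel_a : ∀ x : Q, x ▷ a ▷ a = x)
    (rel_b : ∀ x : Q, x ▷ b ▷ b = x)
    (rel_e : ∀ x : Q, x ▷ e ▷ e = x)
    (rel_f : ∀ x : Q, x ▷ f ▷ f = x)
    (rel_dea : ∀ x : Q, x ▷ d ▷ e ▷ a = x)
    (rel_bdf : ∀ x : Q, x ▷ b ▷ d ▷ f = x)
    (rel_cke : ∀ x : Q, (((ptSym b * ptSym a) ^ k) (x ▷ c)) ▷ a ▷ e = x) :
    ∀ p q : ℤ,
      (Even p → Y a b c d p q ▷ a = Y a b c d (p + 1) (-q) ∧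
        Y a b c d p q ▷ b = Y a b c d (p - 1) (-q)) ∧
      (Odd p → Y a b c d p q ▷ a = Y a b c d (p - 1) (-q) ∧
        Y a b c d p q ▷ b = Y a b c d (p + 1) (-q)) ∧
      Y a b c d p q ▷ e = Y a b c d p q ▷ a ∧
      Y a b c d p q ▷ f = Y a b c d p q ▷ b := by
  intro p q
  have ha : ptSym a * ptSym a = 1 := Equiv.ext rel_a
  have hb : ptSym b * ptSym b = 1 := Equiv.ext rel_b
  have he : ptSym e = ptSym a * (ptSym d)⁻¹ :=
    eq_mul_inv_of_mul_mul_eq_one_left ha (Equiv.ext rel_dea)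
  have hf : ptSym f = ptSym b * (ptSym d)⁻¹ :=
    eq_mul_inv_of_mul_mul_eq_one_right hb (Equiv.ext rel_bdf)
  have had : Inverts (ptSym a) (ptSym d) :=
    inverts_of_mul_inv_mul_self ha (by rw [← he]; exact Equiv.ext rel_e)
  have hbd : Inverts (ptSym b) (ptSym d) :=
    inverts_of_mul_inv_mul_self hb (by rw [← hf]; exact Equiv.ext rel_f)
  have hbad : Commute (ptSym b * ptSym a) (ptSym d) := had.commute_mul hbd
  have hc : ptSym c = (ptSym b * ptSym a) ^ (-k) * (ptSym d)⁻¹ :=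
    eq_zpow_neg_mul_inv ha had (by rw [← he]; exact Equiv.ext rel_cke)
  have hac : Inverts (ptSym a) (ptSym c) :=
    hc ▸ (inverts_mul_self_right ha hb).zpow_mul_inv had hbad (-k)
  have hbc : Inverts (ptSym b) (ptSym c) :=
    hc ▸ (inverts_mul_self_left ha hb).zpow_mul_inv hbd hbad (-k)
  have hdc : Commute (ptSym d) (ptSym c) :=
    hc ▸ (hbad.zpow_left (-k)).symm.mul_right (Commute.refl _).inv_right
  have hfix := ptSym_inv_apply_Y had hdc hbad.symm p q
  exact ⟨fun hp => ⟨Y_rhd_left_of_even hac hp q, Y_rhd_right_of_even hb hbc hp q⟩,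
    fun hp => ⟨Y_rhd_left_of_odd ha hac hp q, Y_rhd_right_of_odd hbc hp q⟩,
    rhd_eq_rhd_of_ptSym_eq he hfix, rhd_eq_rhd_of_ptSym_eq hf hfix⟩

theorem stmt_18
    {Q : Type*} [PaperQuandle Q] (k : ℤ) (m n : ℕ) (a b c d e f : Q)
    (hk : 1 ≤ k) (hm : 0 < m) (hn : 0 < n)
    (rel_a : ∀ x : Q, x ▷ a ▷ a = x)
    (rel_b : ∀ x : Q, x ▷ b ▷ b = x)
    (rel_e : ∀ x : Q, x ▷ e ▷ e = x)
    (rel_f : ∀ x : Q, x ▷ f ▷ f = x)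
    (rel_c : ∀ x : Q, (ptSym c ^ m) x = x)
    (rel_d : ∀ x : Q, (ptSym d ^ n) x = x)
    (rel_dea : ∀ x : Q, x ▷ d ▷ e ▷ a = x)
    (rel_bdf : ∀ x : Q, x ▷ b ▷ d ▷ f = x)
    (rel_cke : ∀ x : Q, (((ptSym b * ptSym a) ^ k) (x ▷ c)) ▷ a ▷ e = x)
    (rel_fca : ∀ x : Q, (((ptSym b * ptSym a) ^ (k - 1)) (x ▷ f ▷ c)) ▷ a = x) :
    ∀ p q : ℤ,
      (Even p → Y a b c d p q ▷ a = Y a b c d (p + 1) (-q) ∧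
        Y a b c d p q ▷ b = Y a b c d (p - 1) (-q)) ∧
      (Odd p → Y a b c d p q ▷ a = Y a b c d (p - 1) (-q) ∧
        Y a b c d p q ▷ b = Y a b c d (p + 1) (-q)) ∧
      Y a b c d p q ▷ e = Y a b c d p q ▷ a ∧
      Y a b c d p q ▷ f = Y a b c d p q ▷ b :=
  stmt_18_general k a b c d e f rel_a rel_b rel_e rel_f rel_dea rel_bdf rel_cke
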